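/- Let e₁ and e₂ be integers with e₂ > e₁ ≥ 0, and define σ : SL(2,k) → SL(4,k) by σ(A) = A^{(p^{e₂})} ⊗ A^{(p^{e₁})}. Then σ is a group homomorphism; moreover the only column vector v ∈ k⁴ with σ(A)·v = v for all A ∈ SL(2,k) is v = 0, and the only row vector w ∈ k⁴ with w·σ(A) = w for all A ∈ SL(2,k) is w = 0. -/

import Mathlib

/-!
On the diagonal torus, `σ(diag(t, t⁻¹))` is diagonal with entries `t ^ (±q₂ ± q₁)`, where
`qᵢ = p ^ eᵢ`. Since `k` is infinite we may pick `t` outside the finitely many roots of unity of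
orders `q₂ + q₁` and `q₂ - q₁`; then no weight equals `1`, so a vector fixed by this single element
is already `0`. The homomorphism and determinant properties hold because `A ↦ A^{(p^e)}` is the
matrix map of the `e`-th Frobenius ring endomorphism and `kron4` is a reindexed Kronecker product.
-/

open Matrix

/-- Entrywise `m`-th power of a 2×2 matrix: `A^{(m)} = [[a^m, b^m],[c^m, d^m]]`. -/
noncomputable def entryPow {k : Type*} [Field k] (A : Matrix (Fin 2) (Fin 2) k) (m : ℕ) :
    Matrix (Fin 2) (Fin 2) k :=
  Matrix.of fun i j => A i j ^ m

/-- The Kronecker product of two 2×2 matrices, written as a 4×4 matrix in 2×2 blocks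
`[[x₁₁·Y, x₁₂·Y],[x₂₁·Y, x₂₂·Y]]`. -/
noncomputable def kron4 {k : Type*} [Field k] (X Y : Matrix (Fin 2) (Fin 2) k) :
    Matrix (Fin 4) (Fin 4) k :=
  !![X 0 0 * Y 0 0, X 0 0 * Y 0 1, X 0 1 * Y 0 0, X 0 1 * Y 0 1;
     X 0 0 * Y 1 0, X 0 0 * Y 1 1, X 0 1 * Y 1 0, X 0 1 * Y 1 1;
     X 1 0 * Y 0 0, X 1 0 * Y 0 1, X 1 1 * Y 0 0, X 1 1 * Y 0 1;
     X 1 0 * Y 1 0, X 1 0 * Y 1 1, X 1 1 * Y 1 0, X 1 1 * Y 1 1]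

open Polynomial
open scoped Kronecker

section Frobenius

variable {k : Type*} [Field k] (p : ℕ) [ExpChar k p]

theorem entryPow_pow_eq_mapMatrix (A : Matrix (Fin 2) (Fin 2) k) (e : ℕ) :
    entryPow A (p ^ e) = (iterateFrobenius k p e).mapMatrix A := by
  ext i j
  simp [entryPow, iterateFrobenius_def]

theorem entryPow_pow_mul (A B : Matrix (Fin 2) (Fin 2) k) (e : ℕ) :
    entryPow (A * B) (p ^ e) = entryPow A (p ^ e) * entryPow B (p ^ e) := by
  simp only [entryPow_pow_eq_mapMatrix, map_mul]

theorem det_entryPow_pow (A : Matrix (Fin 2) (Fin 2) k) (e : ℕ) :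
    (entryPow A (p ^ e)).det = A.det ^ p ^ e := by
  rw [entryPow_pow_eq_mapMatrix, ← RingHom.map_det, iterateFrobenius_def]

end Frobenius

section Kronecker

variable {k : Type*} [Field k]

-- `finProdFinEquiv` sends `(i, j)` to `2 * i + j`, which is the block layout of `kron4`.
theorem kron4_eq_reindex_kronecker (X Y : Matrix (Fin 2) (Fin 2) k) :
    kron4 X Y = reindex (finProdFinEquiv (m := 2) (n := 2)) finProdFinEquiv (X ⊗ₖ Y) := by
  ext i j
  fin_cases i <;> fin_cases j <;> rfl

theorem kron4_mul (X₁ X₂ Y₁ Y₂ : Matrix (Fin 2) (Fin 2) k) :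
    kron4 (X₁ * X₂) (Y₁ * Y₂) = kron4 X₁ Y₁ * kron4 X₂ Y₂ := by
  simp only [kron4_eq_reindex_kronecker, mul_kronecker_mul, reindex_apply, submatrix_mul_equiv]

theorem det_kron4 (X Y : Matrix (Fin 2) (Fin 2) k) :
    (kron4 X Y).det = X.det ^ 2 * Y.det ^ 2 := by
  rw [kron4_eq_reindex_kronecker, det_reindex_self, det_kronecker, Fintype.card_fin]

theorem kron4_diagonal (a b : Fin 2 → k) :
    kron4 (diagonal a) (diagonal b) =
      diagonal fun i =>
        a (finProdFinEquiv (m := 2) (n := 2) |>.symm i).1 *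
          b (finProdFinEquiv (m := 2) (n := 2) |>.symm i).2 := by
  rw [kron4_eq_reindex_kronecker, diagonal_kronecker_diagonal, reindex_apply,
    submatrix_diagonal_equiv]
  rfl

end Kronecker

section FixedVectors

variable {n K : Type*} [Fintype n] [DecidableEq n] [Semiring K] [IsCancelMulZero K] {d : n → K}

theorem eq_zero_of_diagonal_mulVec_eq_self (hd : ∀ i, d i ≠ 1) {v : n → K}
    (hv : diagonal d *ᵥ v = v) : v = 0 := by
  funext i
  have hi := congrFun hv i
  rw [mulVec_diagonal, mul_left_eq_self₀] at hi
  exact hi.resolve_left (hd i)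

theorem eq_zero_of_vecMul_diagonal_eq_self (hd : ∀ i, d i ≠ 1) {w : n → K}
    (hw : w ᵥ* diagonal d = w) : w = 0 := by
  funext i
  have hi := congrFun hw i
  rw [vecMul_diagonal, mul_right_eq_self₀] at hi
  exact hi.resolve_left (hd i)

end FixedVectors

theorem vecCons_inv_mul_vecCons_inv_ne_one {G : Type*} [DivisionCommMonoid G] {x y : G}
    (hxy : x * y ≠ 1) (hne : x ≠ y) (i j : Fin 2) : ![x, x⁻¹] i * ![y, y⁻¹] j ≠ 1 := by
  have h₁ : x * y⁻¹ ≠ 1 := fun h => hne (eq_of_mul_inv_eq_one h)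
  have h₂ : x⁻¹ * y ≠ 1 := fun h => hne (eq_of_inv_mul_eq_one h)
  have h₃ : x⁻¹ * y⁻¹ ≠ 1 := by rw [← mul_inv]; exact inv_ne_one.mpr hxy
  fin_cases i <;> fin_cases j <;> simpa

theorem exists_ne_zero_forall_pow_ne_one (K : Type*) [Field K] [Infinite K] (s : Finset ℕ)
    (hs : 0 ∉ s) : ∃ t : K, t ≠ 0 ∧ ∀ m ∈ s, t ^ m ≠ 1 := by
  classical
  obtain ⟨t, ht⟩ := Infinite.exists_notMem_finset
    (insert 0 (s.biUnion fun m => nthRootsFinset m (1 : K)))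
  simp only [Finset.mem_insert, Finset.mem_biUnion, not_or, not_exists, not_and] at ht
  refine ⟨t, ht.1, fun m hm htm => ht.2 m hm ?_⟩
  rw [mem_nthRootsFinset (Nat.pos_of_ne_zero (ne_of_mem_of_not_mem hm hs))]
  exact htm

theorem entryPow_diagonal_inv {k : Type*} [Field k] (t : k) {m : ℕ} (hm : m ≠ 0) :
    entryPow (diagonal ![t, t⁻¹]) m = diagonal ![t ^ m, (t ^ m)⁻¹] := by
  ext i j
  fin_cases i <;> fin_cases j <;> simp [entryPow, zero_pow hm, inv_pow]

theorem exists_kron4_entryPow_eq_diagonal {k : Type*} [Field k] [Infinite k] {q₁ q₂ : ℕ}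
    (hq₁ : q₁ ≠ 0) (hq : q₁ < q₂) :
    ∃ A : SpecialLinearGroup (Fin 2) k, ∃ d : Fin 4 → k, (∀ i, d i ≠ 1) ∧
      kron4 (entryPow A.1 q₂) (entryPow A.1 q₁) = diagonal d := by
  obtain ⟨t, ht0, ht⟩ :=
    exists_ne_zero_forall_pow_ne_one k {q₂ + q₁, q₂ - q₁} <| by
      simp only [Finset.mem_insert, Finset.mem_singleton]
      omega
  have hsum : t ^ q₂ * t ^ q₁ ≠ 1 := by
    rw [← pow_add]
    exact ht _ (by simp)
  have hne : t ^ q₂ ≠ t ^ q₁ := fun h => ht (q₂ - q₁) (by simp) <| by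
    rw [pow_sub₀ t ht0 hq.le, h, mul_inv_cancel₀ (pow_ne_zero _ ht0)]
  refine ⟨⟨diagonal ![t, t⁻¹], by simp [ht0]⟩, _, ?_, by
    rw [entryPow_diagonal_inv _ (by omega), entryPow_diagonal_inv _ hq₁, kron4_diagonal]⟩
  exact fun i => vecCons_inv_mul_vecCons_inv_ne_one hsum hne _ _

/-- For `e₂ > e₁ ≥ 0`, the map `σ(A) = A^{(p^{e₂})} ⊗ A^{(p^{e₁})}`
takes values in `SL(4,k)`, is a group homomorphism, and has no nonzero fixed column
vectors and no nonzero fixed row vectors. -/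
theorem stmt11 {k : Type*} [Field k] [IsAlgClosed k] {p : ℕ} [Fact p.Prime] [CharP k p]
    (e₁ e₂ : ℕ) (h : e₁ < e₂) :
    (∀ A : SpecialLinearGroup (Fin 2) k,
        (kron4 (entryPow A.1 (p ^ e₂)) (entryPow A.1 (p ^ e₁))).det = 1) ∧
      (∀ A B : SpecialLinearGroup (Fin 2) k,
        kron4 (entryPow (A * B).1 (p ^ e₂)) (entryPow (A * B).1 (p ^ e₁)) =
          kron4 (entryPow A.1 (p ^ e₂)) (entryPow A.1 (p ^ e₁)) *
            kron4 (entryPow B.1 (p ^ e₂)) (entryPow B.1 (p ^ e₁))) ∧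
      (∀ v : Fin 4 → k,
        (∀ A : SpecialLinearGroup (Fin 2) k,
          kron4 (entryPow A.1 (p ^ e₂)) (entryPow A.1 (p ^ e₁)) *ᵥ v = v) → v = 0) ∧
      ∀ w : Fin 4 → k,
        (∀ A : SpecialLinearGroup (Fin 2) k,
          w ᵥ* kron4 (entryPow A.1 (p ^ e₂)) (entryPow A.1 (p ^ e₁)) = w) → w = 0 := by
  have hp : p.Prime := Fact.out
  obtain ⟨T, d, hd, hT⟩ := exists_kron4_entryPow_eq_diagonal (k := k)
    (pow_ne_zero e₁ hp.ne_zero) (Nat.pow_lt_pow_right hp.one_lt h)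
  refine ⟨fun A => ?_, fun A B => ?_, fun v hv => ?_, fun w hw => ?_⟩
  · rw [det_kron4, det_entryPow_pow, det_entryPow_pow, A.det_coe]
    simp only [one_pow, mul_one]
  · rw [show (A * B).1 = A.1 * B.1 from rfl, entryPow_pow_mul, entryPow_pow_mul, kron4_mul]
  · exact eq_zero_of_diagonal_mulVec_eq_self hd (hT ▸ hv T)
  · exact eq_zero_of_vecMul_diagonal_eq_self hd (hT ▸ hw T)
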